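/- Let $P(z) = c\prod_{j=1}^n (z-z_j)$ with all $|z_j| \le k$, $0 < k \le 1$, and let $\gamma = (\gamma_1,\dots,\gamma_n)$ be nonnegative reals, not all zero, with sum $\Lambda$. Define the generalized derivative $P^\gamma(z) = P(z)\sum_{j=1}^n \frac{\gamma_j}{z - z_j}$. Then for all $|z| = 1$, $|P^\gamma(z)| \ge \frac{k}{1+k}\left(\frac{\Lambda}{k} + \gamma_m \cdot \frac{k^n|a_n| - |a_0|}{k^n|a_n| + |a_0|}\right) |P(z)|$, where $\gamma_m = \min_j \gamma_j$, $a_n$ is the leading coefficient and $a_0$ the constant term of $P$. -/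

import Mathlib

/-!
On `|w| = 1` we have `Pγ(w) = P(w) · S` with `S = ∑ γⱼ / (w - zⱼ)`, and
`|S| ≥ Re (w S) = ∑ γⱼ Re (w / (w - zⱼ)) ≥ ∑ γⱼ / (1 + |zⱼ|)`.
Writing `rⱼ = |zⱼ| ≤ k`, each term satisfies
`γⱼ / (1 + rⱼ) ≥ γⱼ / (1 + k) + k / (1 + k) · γₘ (k - rⱼ) / (k + rⱼ)`, and since
`t ↦ (1 - t) / (1 + t)` satisfies `f (ab) ≤ f a + f b` on `[0, 1]`,
`∑ (k - rⱼ) / (k + rⱼ) ≥ (kⁿ - ∏ rⱼ) / (kⁿ + ∏ rⱼ) = (kⁿ |aₙ| - |a₀|) / (kⁿ |aₙ| + |a₀|)`.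
-/

open Finset Polynomial

lemma one_sub_mul_div_one_add_mul_le {a b : ℝ} (ha0 : 0 ≤ a) (ha1 : a ≤ 1) (hb0 : 0 ≤ b)
    (hb1 : b ≤ 1) :
    (1 - a * b) / (1 + a * b) ≤ (1 - a) / (1 + a) + (1 - b) / (1 + b) := by
  rw [div_add_div _ _ (by positivity) (by positivity),
    div_le_div_iff₀ (by positivity) (by positivity)]
  nlinarith [mul_nonneg (mul_nonneg (sub_nonneg.2 (mul_le_one₀ ha1 hb0 hb1)) (sub_nonneg.2 ha1))
    (sub_nonneg.2 hb1)]

lemma one_sub_prod_div_one_add_prod_le_sum {ι : Type*} (s : Finset ι) {f : ι → ℝ}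
    (h0 : ∀ j ∈ s, 0 ≤ f j) (h1 : ∀ j ∈ s, f j ≤ 1) :
    (1 - ∏ j ∈ s, f j) / (1 + ∏ j ∈ s, f j) ≤ ∑ j ∈ s, (1 - f j) / (1 + f j) := by
  classical
  induction s using Finset.induction with
  | empty => simp
  | insert a s ha ih =>
    simp only [mem_insert, forall_eq_or_imp] at h0 h1
    rw [prod_insert ha, sum_insert ha]
    grw [one_sub_mul_div_one_add_mul_le h0.1 h1.1 (prod_nonneg h0.2) (prod_le_one h0.2 h1.2),
      ih h0.2 h1.2]

lemma pow_sub_prod_div_pow_add_prod_le_sum {ι : Type*} [Fintype ι] {k : ℝ} (hk : 0 < k)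
    {r : ι → ℝ} (hr0 : ∀ j, 0 ≤ r j) (hrk : ∀ j, r j ≤ k) :
    (k ^ Fintype.card ι - ∏ j, r j) / (k ^ Fintype.card ι + ∏ j, r j) ≤
      ∑ j, (k - r j) / (k + r j) := by
  have hscale : ∀ x : ℝ, ∀ {a : ℝ}, 0 < a → (a - x) / (a + x) = (1 - x / a) / (1 + x / a) :=
    fun x a ha => by field_simp
  rw [hscale _ (by positivity), ← card_univ, ← prod_const, ← prod_div_distrib]
  simp only [hscale _ hk]
  exact one_sub_prod_div_one_add_prod_le_sum _ (fun j _ => div_nonneg (hr0 j) hk.le)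
    (fun j _ => div_le_one_of_le₀ (hrk j) hk.le)

lemma div_one_add_add_le_div_one_add {k r g m : ℝ} (hk0 : 0 < k) (hk1 : k ≤ 1) (hr0 : 0 ≤ r)
    (hrk : r ≤ k) (hm0 : 0 ≤ m) (hmg : m ≤ g) :
    g / (1 + k) + k / (1 + k) * (m * ((k - r) / (k + r))) ≤ g / (1 + r) := by
  have hkr : 0 ≤ k - r := sub_nonneg.2 hrk
  have hsum : g / (1 + k) + k / (1 + k) * (m * ((k - r) / (k + r))) =
      (g * (k + r) + m * k * (k - r)) / ((1 + k) * (k + r)) := by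
    field_simp
  rw [hsum, div_le_div_iff₀ (by positivity) (by positivity)]
  nlinarith [mul_nonneg (mul_nonneg hkr (sub_nonneg.2 hmg)) (by positivity : 0 ≤ k + r),
    mul_nonneg (mul_nonneg (mul_nonneg hkr hm0) hr0) (sub_nonneg.2 hk1)]

lemma lower_bound_le_sum_div_one_add {ι : Type*} [Fintype ι] {k : ℝ} (hk0 : 0 < k)
    (hk1 : k ≤ 1) {r γ : ι → ℝ} (hr0 : ∀ j, 0 ≤ r j) (hrk : ∀ j, r j ≤ k) {γm : ℝ} (hγm0 : 0 ≤ γm)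
    (hγm : ∀ j, γm ≤ γ j) :
    k / (1 + k) * ((∑ j, γ j) / k + γm * ((k ^ Fintype.card ι - ∏ j, r j) /
      (k ^ Fintype.card ι + ∏ j, r j))) ≤ ∑ j, γ j / (1 + r j) :=
  calc k / (1 + k) * ((∑ j, γ j) / k + γm * ((k ^ Fintype.card ι - ∏ j, r j) /
        (k ^ Fintype.card ι + ∏ j, r j)))
      = (∑ j, γ j) / (1 + k) + k / (1 + k) * (γm * ((k ^ Fintype.card ι - ∏ j, r j) /
        (k ^ Fintype.card ι + ∏ j, r j))) := by field_simp
    _ ≤ (∑ j, γ j) / (1 + k) + k / (1 + k) * (γm * ∑ j, (k - r j) / (k + r j)) := by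
      grw [pow_sub_prod_div_pow_add_prod_le_sum hk0 hr0 hrk]
    _ = ∑ j, (γ j / (1 + k) + k / (1 + k) * (γm * ((k - r j) / (k + r j)))) := by
      rw [sum_add_distrib, sum_div, mul_sum, mul_sum]
    _ ≤ ∑ j, γ j / (1 + r j) := sum_le_sum fun j _ =>
      div_one_add_add_le_div_one_add hk0 hk1 (hr0 j) (hrk j) hγm0 (hγm j)

lemma inv_le_re_inv_one_sub {v : ℂ} (hv : ‖v‖ ≤ 1) (hv1 : v ≠ 1) :
    (1 + ‖v‖)⁻¹ ≤ (1 - v)⁻¹.re := by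
  have hN : 0 < Complex.normSq (1 - v) := Complex.normSq_pos.2 (sub_ne_zero.2 hv1.symm)
  have hnorm : ‖v‖ ^ 2 = v.re ^ 2 + v.im ^ 2 := by
    rw [Complex.sq_norm, Complex.normSq_apply]; ring
  rw [Complex.inv_re, Complex.sub_re, Complex.one_re, ← one_div,
    div_le_div_iff₀ (by positivity) hN, Complex.normSq_apply, Complex.sub_re, Complex.sub_im,
    Complex.one_re, Complex.one_im]
  -- `(1 - Re v)(1 + |v|) - |1 - v|² = (|v| + Re v)(1 - |v|)`
  nlinarith [mul_nonneg (neg_le_iff_add_nonneg.1 (abs_le.1 (Complex.abs_re_le_norm v)).1)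
    (sub_nonneg.2 hv)]

lemma inv_one_add_norm_le_re_div_sub {w u : ℂ} (hw : ‖w‖ = 1) (hu : ‖u‖ ≤ 1) (hwu : w ≠ u) :
    (1 + ‖u‖)⁻¹ ≤ (w / (w - u)).re := by
  have hw0 : w ≠ 0 := norm_ne_zero_iff.1 (hw ▸ one_ne_zero)
  have hdiv : w / (w - u) = (1 - u / w)⁻¹ := by
    rw [one_sub_div hw0, inv_div]
  have hnorm : ‖u / w‖ = ‖u‖ := by rw [norm_div, hw, div_one]
  rw [hdiv, ← hnorm]
  exact inv_le_re_inv_one_sub (hnorm ▸ hu) fun h => hwu ((div_eq_one_iff_eq hw0).1 h).symm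

lemma sum_div_one_add_norm_le_norm_sum_div_sub {ι : Type*} [Fintype ι] {w : ℂ} (hw : ‖w‖ = 1)
    {z : ι → ℂ} (hz : ∀ j, ‖z j‖ ≤ 1) (hwz : ∀ j, w ≠ z j) {γ : ι → ℝ} (hγ : ∀ j, 0 ≤ γ j) :
    ∑ j, γ j / (1 + ‖z j‖) ≤ ‖∑ j, (γ j : ℂ) / (w - z j)‖ :=
  calc ∑ j, γ j / (1 + ‖z j‖)
      ≤ ∑ j, γ j * (w / (w - z j)).re := sum_le_sum fun j _ =>
        mul_le_mul_of_nonneg_left (inv_one_add_norm_le_re_div_sub hw (hz j) (hwz j)) (hγ j)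
    _ = (w * ∑ j, (γ j : ℂ) / (w - z j)).re := by
      simp only [mul_sum, Complex.re_sum, mul_div_left_comm w, Complex.re_ofReal_mul]
    _ ≤ ‖w * ∑ j, (γ j : ℂ) / (w - z j)‖ := Complex.re_le_norm _
    _ = ‖∑ j, (γ j : ℂ) / (w - z j)‖ := by rw [norm_mul, hw, one_mul]

lemma eval_sum_mul_prod_erase {ι : Type*} [Fintype ι] [DecidableEq ι] {z : ι → ℂ} {w : ℂ}
    (hwz : ∀ j, w ≠ z j) (γ : ι → ℂ) :
    (∑ j, C (γ j) * ∏ i ∈ univ.erase j, (X - C (z i))).eval w =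
      (∏ j, (w - z j)) * ∑ j, γ j / (w - z j) := by
  simp only [eval_finsetSum, eval_mul, eval_C, eval_prod, eval_sub, eval_X, mul_sum]
  refine sum_congr rfl fun j _ => ?_
  rw [← mul_prod_erase univ _ (mem_univ j)]
  field_simp [sub_ne_zero.2 (hwz j)]

theorem stmt_5_general (n : ℕ) (c : ℂ) (z : Fin n → ℂ)
    (k : ℝ) (hk0 : 0 < k) (hk1 : k ≤ 1) (hz : ∀ j, ‖z j‖ ≤ k)
    (γ : Fin n → ℝ) (hγ : ∀ j, 0 ≤ γ j)
    (γm : ℝ) (hγm : IsLeast (Set.range γ) γm)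
    (P : Polynomial ℂ) (hP : P = Polynomial.C c * ∏ j, (Polynomial.X - Polynomial.C (z j)))
    (Pγ : Polynomial ℂ)
    (hPγ : Pγ = Polynomial.C c * ∑ j, Polynomial.C (γ j : ℂ) *
      ∏ i ∈ Finset.univ.erase j, (Polynomial.X - Polynomial.C (z i)))
    (w : ℂ) (hw : ‖w‖ = 1) :
    k / (1 + k) *
        ((∑ j, γ j) / k + γm * ((k ^ n * ‖c‖ - ‖P.coeff 0‖) /
          (k ^ n * ‖c‖ + ‖P.coeff 0‖))) * ‖P.eval w‖ ≤
      ‖Pγ.eval w‖ := by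
  have hPeval : ∀ v, P.eval v = c * ∏ j, (v - z j) := fun v => by
    simp [hP, eval_prod]
  rcases eq_or_ne (P.eval w) 0 with hPw | hPw
  · simp [hPw]
  have hc : c ≠ 0 := left_ne_zero_of_mul (hPeval w ▸ hPw)
  have hwz : ∀ j, w ≠ z j := fun j h => hPw (by simp [hPeval, h, prod_eq_zero (mem_univ j)])
  obtain ⟨⟨j₀, rfl⟩, hγm⟩ := hγm
  have hratio : (k ^ n * ‖c‖ - ‖P.coeff 0‖) / (k ^ n * ‖c‖ + ‖P.coeff 0‖) =
      (k ^ n - ∏ j, ‖z j‖) / (k ^ n + ∏ j, ‖z j‖) := by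
    rw [coeff_zero_eq_eval_zero, hPeval, norm_mul, norm_prod]
    simp only [zero_sub, norm_neg]
    rw [mul_comm ‖c‖, ← sub_mul, ← add_mul, mul_div_mul_right _ _ (norm_ne_zero_iff.2 hc)]
  have hbound := lower_bound_le_sum_div_one_add hk0 hk1 (fun j => norm_nonneg (z j)) hz
    (hγ j₀) (fun j => hγm (Set.mem_range_self j))
  rw [Fintype.card_fin, ← hratio] at hbound
  rw [hPγ, eval_mul, eval_C, eval_sum_mul_prod_erase hwz, ← mul_assoc, ← hPeval, norm_mul,
    mul_comm ‖P.eval w‖]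
  gcongr
  exact hbound.trans (sum_div_one_add_norm_le_norm_sum_div_sub hw (fun j => (hz j).trans hk1)
    hwz hγ)

theorem stmt_5 (n : ℕ) (hn : 0 < n) (c : ℂ) (hc : c ≠ 0) (z : Fin n → ℂ)
    (k : ℝ) (hk0 : 0 < k) (hk1 : k ≤ 1) (hz : ∀ j, ‖z j‖ ≤ k)
    (γ : Fin n → ℝ) (hγ : ∀ j, 0 ≤ γ j) (hγ0 : ∃ j, γ j ≠ 0)
    (γm : ℝ) (hγm : IsLeast (Set.range γ) γm)
    (P : Polynomial ℂ) (hP : P = Polynomial.C c * ∏ j, (Polynomial.X - Polynomial.C (z j)))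
    (Pγ : Polynomial ℂ)
    (hPγ : Pγ = Polynomial.C c * ∑ j, Polynomial.C (γ j : ℂ) *
      ∏ i ∈ Finset.univ.erase j, (Polynomial.X - Polynomial.C (z i)))
    (w : ℂ) (hw : ‖w‖ = 1) :
    k / (1 + k) *
        ((∑ j, γ j) / k + γm * ((k ^ n * ‖c‖ - ‖P.coeff 0‖) /
          (k ^ n * ‖c‖ + ‖P.coeff 0‖))) * ‖P.eval w‖ ≤
      ‖Pγ.eval w‖ :=
  stmt_5_general n c z k hk0 hk1 hz γ hγ γm hγm P hP Pγ hPγ w hw
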